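/- Let f : ℝ^d → ℝ be a C² function satisfying f(x+h) + f(x−h) − 2f(x) ≤ C ε² |h|² for all x, h ∈ ℝ^d and with |∇f(x)| ≤ Cε everywhere (e.g. f ∈ F(C,ε)). Then for every x ∈ ℝ^d, Hf(x) ≤ f(x) − ½|∇f(x)|² + ½ C³ ε⁴. -/

import Mathlib

open MeasureTheory Real

/-- The quadratic infimum convolution `Hf(x) = inf_y ( f(x+y) + |y|²/2 )`. -/
noncomputable def Hconv {E : Type*} [NormedAddCommGroup E] (f : E → ℝ) (x : E) : ℝ :=
  ⨅ y : E, (f (x + y) + ‖y‖ ^ 2 / 2)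

/-!
Test the infimum at `y = -∇f(x)`. The second-difference bound makes
`φ t = f (x + t h) - t Df(x)h - K|h|²t²/2` midpoint concave, so `φ 1 - φ 0` is dominated by the
dyadic slopes `2ⁿ (φ 2⁻ⁿ - φ 0)`, which tend to `φ'(0) = 0`. This is the upper Taylor bound
`f(x+h) ≤ f(x) + ⟨∇f(x), h⟩ + K|h|²/2`; with `h = -∇f(x)`, `K = Cε²` and `|∇f| ≤ Cε` it gives the
claim. The Lipschitz bound is what makes the infimum bounded below, hence not the junk value `0`.
-/

lemma le_add_of_hasDerivAt_of_add_le_two_mul_half {φ : ℝ → ℝ} {φ' : ℝ}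
    (hφ : HasDerivAt φ φ' 0) (hmid : ∀ t, φ t + φ 0 ≤ 2 * φ (t / 2)) :
    φ 1 ≤ φ 0 + φ' := by
  have hdyadic : ∀ n : ℕ, φ 1 - φ 0 ≤ ((2 : ℝ)⁻¹ ^ n)⁻¹ * (φ (0 + (2 : ℝ)⁻¹ ^ n) - φ 0) := by
    intro n
    induction n with
    | zero => simp
    | succ n ih =>
      have hhalf := hmid ((2 : ℝ)⁻¹ ^ n)
      rw [zero_add] at ih ⊢
      calc φ 1 - φ 0 ≤ ((2 : ℝ)⁻¹ ^ n)⁻¹ * (φ ((2 : ℝ)⁻¹ ^ n) - φ 0) := ih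
        _ ≤ ((2 : ℝ)⁻¹ ^ n)⁻¹ * (2 * (φ ((2 : ℝ)⁻¹ ^ n / 2) - φ 0)) := by gcongr; linarith
        _ = ((2 : ℝ)⁻¹ ^ (n + 1))⁻¹ * (φ ((2 : ℝ)⁻¹ ^ (n + 1)) - φ 0) := by
          rw [pow_succ, div_eq_mul_inv]; field_simp
  have hslope := hφ.tendsto_slope_zero_right.comp
    (tendsto_pow_atTop_nhdsWithin_zero_of_lt_one (r := (2 : ℝ)⁻¹) (by norm_num) (by norm_num))
  linarith [ge_of_tendsto' hslope hdyadic]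

lemma le_add_fderiv_add_of_second_diff_le {E : Type*} [NormedAddCommGroup E]
    [NormedSpace ℝ E] {f : E → ℝ} (hf : Differentiable ℝ f) {K : ℝ}
    (hii : ∀ x h : E, f (x + h) + f (x - h) - 2 * f x ≤ K * ‖h‖ ^ 2) (x h : E) :
    f (x + h) ≤ f x + fderiv ℝ f x h + K * ‖h‖ ^ 2 / 2 := by
  set φ : ℝ → ℝ := fun t => f (x + t • h) - t * fderiv ℝ f x h - K * ‖h‖ ^ 2 * t ^ 2 / 2
  have hφ : HasDerivAt φ 0 0 := by
    have hline : HasDerivAt (fun t : ℝ => x + t • h) h 0 := by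
      simpa using ((hasDerivAt_id (0 : ℝ)).smul_const h).const_add x
    have hf0 : HasFDerivAt f (fderiv ℝ f x) (x + (0 : ℝ) • h) := by
      simpa using (hf x).hasFDerivAt
    exact (((hf0.comp_hasDerivAt 0 hline).sub
      ((hasDerivAt_id 0).mul_const (fderiv ℝ f x h))).sub
      (((hasDerivAt_pow 2 (0 : ℝ)).const_mul (K * ‖h‖ ^ 2)).div_const 2)).congr_deriv (by simp)
  have hmid : ∀ t, φ t + φ 0 ≤ 2 * φ (t / 2) := by
    intro t
    have hstep := hii (x + (t / 2) • h) ((t / 2) • h)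
    rw [add_assoc, ← add_smul, add_halves, add_sub_cancel_right, norm_smul, mul_pow,
      Real.norm_eq_abs, sq_abs] at hstep
    simp only [φ, zero_smul, add_zero, zero_mul, sub_zero]
    nlinarith
  have := le_add_of_hasDerivAt_of_add_le_two_mul_half hφ hmid
  simp only [φ, one_smul, zero_smul, add_zero] at this
  linarith

lemma LipschitzWith.Hconv_le {E : Type*} [NormedAddCommGroup E] {f : E → ℝ} {L : NNReal}
    (hf : LipschitzWith L f) (x y : E) : Hconv f x ≤ f (x + y) + ‖y‖ ^ 2 / 2 := by
  refine ciInf_le ⟨f x - L ^ 2 / 2, ?_⟩ y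
  rintro _ ⟨z, rfl⟩
  have hz : |f (x + z) - f x| ≤ L * ‖z‖ := by
    simpa [Real.dist_eq] using hf.dist_le_mul (x + z) x
  nlinarith [abs_le.mp hz, sq_nonneg (‖z‖ - L)]

lemma lipschitzWith_of_norm_gradient_le {F : Type*} [NormedAddCommGroup F]
    [InnerProductSpace ℝ F] [CompleteSpace F] {f : F → ℝ} (hf : Differentiable ℝ f) {L : ℝ}
    (hL : ∀ x, ‖gradient f x‖ ≤ L) :
    LipschitzWith L.toNNReal f := by
  refine lipschitzWith_of_nnnorm_fderiv_le hf fun x => ?_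
  rw [← toDual_gradient, ← NNReal.coe_le_coe, coe_nnnorm, LinearIsometryEquiv.norm_map]
  exact (hL x).trans (le_coe_toNNReal L)

theorem Hconv_pointwise_bound_general (d : ℕ) (C ε : ℝ) (hC : 0 < C)
    (f : EuclideanSpace ℝ (Fin d) → ℝ) (hf : ContDiff ℝ 2 f)
    (hii : ∀ x h : EuclideanSpace ℝ (Fin d),
      f (x + h) + f (x - h) - 2 * f x ≤ C * ε ^ 2 * ‖h‖ ^ 2)
    (hgrad : ∀ x, ‖gradient f x‖ ≤ C * ε) :
    ∀ x, Hconv f x ≤ f x - ‖gradient f x‖ ^ 2 / 2 + C ^ 3 * ε ^ 4 / 2 := by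
  intro x
  have hdiff : Differentiable ℝ f := hf.differentiable (by norm_num)
  set g := gradient f x
  have hdescent : fderiv ℝ f x (-g) = -‖g‖ ^ 2 := by
    rw [← inner_gradient_left, inner_neg_right, real_inner_self_eq_norm_sq]
  have htaylor := le_add_fderiv_add_of_second_diff_le hdiff hii x (-g)
  have hg : ‖g‖ ^ 2 ≤ (C * ε) ^ 2 := pow_le_pow_left₀ (norm_nonneg g) (hgrad x) 2
  calc Hconv f x ≤ f (x + -g) + ‖-g‖ ^ 2 / 2 :=
        (lipschitzWith_of_norm_gradient_le hdiff hgrad).Hconv_le x (-g)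
    _ ≤ f x - ‖g‖ ^ 2 / 2 + C * ε ^ 2 * ‖g‖ ^ 2 / 2 := by rw [norm_neg] at htaylor ⊢; linarith
    _ ≤ f x - ‖g‖ ^ 2 / 2 + C ^ 3 * ε ^ 4 / 2 := by nlinarith [sq_nonneg ε]

/-- Pointwise bound on `Hf`: if `f` is `C²`, satisfies
`f(x+h) + f(x−h) − 2f(x) ≤ Cε²|h|²` and `|∇f| ≤ Cε` everywhere (e.g. `f ∈ F(C,ε)`),
then `Hf(x) ≤ f(x) − ½|∇f(x)|² + ½C³ε⁴` for every `x`. -/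
theorem Hconv_pointwise_bound (d : ℕ) (C ε : ℝ) (hC : 0 < C)
    (hε : ε ∈ Set.Ioc (0 : ℝ) 1)
    (f : EuclideanSpace ℝ (Fin d) → ℝ) (hf : ContDiff ℝ 2 f)
    (hii : ∀ x h : EuclideanSpace ℝ (Fin d),
      f (x + h) + f (x - h) - 2 * f x ≤ C * ε ^ 2 * ‖h‖ ^ 2)
    (hgrad : ∀ x, ‖gradient f x‖ ≤ C * ε) :
    ∀ x, Hconv f x ≤ f x - ‖gradient f x‖ ^ 2 / 2 + C ^ 3 * ε ^ 4 / 2 :=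
  Hconv_pointwise_bound_general d C ε hC f hf hii hgrad
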